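/- arXiv:1307.0633 — 5 statements merged into one kernel-verified Lean document; each statement's English description precedes it below -/
import Mathlib

section
/- Let F be a field, X a vector space over F, and f, g : F → X functions satisfying f(x+y) − f(x) − f(y) = g(xy) − x·g(y) − y·g(x) for all x, y ∈ F. Then there exist additive functions α, β : F → X and a function φ : F → X satisfying φ(xy) = x·φ(y) + y·φ(x) for all x, y ∈ F, such that f(x) = β(x) + (1/2)·α(x²) − x·α(x) and g(x) = φ(x) + α(x) for all x ∈ F. -/
/-!
Put `c x y = g (x * y) - x • g y - y • g x`. By the equation `c` is also the Cauchy difference of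
`f`, so it is a symmetric additive 2-cocycle as well as a Hochschild 2-cocycle; comparing the two
cocycle identities shows that the Cauchy difference of `g` is homogeneous, and hence `c` is
biadditive. Such a cocycle defines a commutative square-zero extension `E` of `F` by `X`, and `c`
is the Hochschild coboundary of an additive `α` as soon as `E → F` has a ring-hom section. The
section exists because a field is formally smooth over its prime field: take, by Zorn, a maximal
subring of `E` that contains all `p`-th powers and on which the projection is injective. Its image
is a subfield, and an element outside it could still be adjoined: freely if it is transcendental,
after one Newton step if it is separable, and through the canonical lift of its `p`-th power if
it is purely inseparable. Then `φ = g - α` is a derivation and `f - α (x ^ 2) / 2 + x • α x` is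
additive.
-/

open Polynomial

theorem minpoly_eq_X_pow_sub_C_of_notMem_range {K L : Type*} [Field K] [Field L] [Algebra K L]
    {p : ℕ} (hp : p.Prime) [CharP L p] {t : L} (ht : t ∉ (algebraMap K L).range) (a : K)
    (ha : algebraMap K L a = t ^ p) : minpoly K t = X ^ p - C a := by
  have : Fact p.Prime := ⟨hp⟩
  have hroot : ∀ b : K, b ^ p ≠ a := fun b hb =>
    ht ⟨b, frobenius_inj L p (by rw [frobenius_def, frobenius_def, ← map_pow, hb, ha])⟩
  refine (minpoly.eq_of_irreducible_of_monic (X_pow_sub_C_irreducible_of_prime hp hroot) ?_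
    (monic_X_pow_sub_C a hp.ne_zero)).symm
  rw [map_sub, map_pow, aeval_X, aeval_C, ha, sub_self]

section SquareZeroSection

variable {E F : Type*} [CommRing E] [Field F]

/-- Since `(r + n) ^ p = r ^ p` for `n` in the square-zero kernel, every `p`-th power is a
canonical lift; asking for them is what makes purely inseparable elements liftable. -/
def IsLiftingSubring (π : E →+* F) (p : ℕ) (S : Subring E) : Prop :=
  (∀ r : E, r ^ p ∈ S) ∧ ∀ r ∈ S, π r = 0 → r = 0

variable {π : E →+* F} {p : ℕ} {S : Subring E}

theorem IsLiftingSubring.eq_of_map_eq (hS : IsLiftingSubring π p S) {a b : E}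
    (ha : a ∈ S) (hb : b ∈ S) (hab : π a = π b) : a = b :=
  sub_eq_zero.mp <| hS.2 _ (sub_mem ha hb) (by rw [map_sub, hab, sub_self])

theorem isUnit_of_map_ne_zero (hπ : Function.Surjective π)
    (hsq : ∀ a b, π a = 0 → π b = 0 → a * b = 0) {r : E} (hr : π r ≠ 0) : IsUnit r := by
  obtain ⟨s, hs⟩ := hπ (π r)⁻¹
  have hn : π (r * s - 1) = 0 := by rw [map_sub, map_mul, hs, mul_inv_cancel₀ hr, map_one, sub_self]
  refine IsUnit.of_mul_eq_one (s * (1 - (r * s - 1))) ?_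
  linear_combination -(hsq _ _ hn hn)

-- Newton's method, exact after one step because the kernel squares to zero
theorem exists_eval_eq_zero_of_map_eval_eq_zero (hπ : Function.Surjective π)
    (hsq : ∀ a b, π a = 0 → π b = 0 → a * b = 0) (P : E[X]) (r₀ : E)
    (h0 : π (P.eval r₀) = 0) (h1 : π (P.derivative.eval r₀) ≠ 0) :
    ∃ r, π r = π r₀ ∧ P.eval r = 0 := by
  obtain ⟨u, hu⟩ := isUnit_of_map_ne_zero hπ hsq h1
  set δ := -(↑u⁻¹ * P.eval r₀)
  have hδ : π δ = 0 := by simp only [δ, map_neg, map_mul, h0, mul_zero, neg_zero]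
  refine ⟨r₀ + δ, by rw [map_add, hδ, add_zero], ?_⟩
  rw [eval_add_of_sq_eq_zero _ _ _ (by rw [sq]; exact hsq _ _ hδ hδ), ← hu]
  simp only [δ, mul_neg, ← mul_assoc, Units.mul_inv, one_mul, add_neg_cancel]

theorem exists_isLiftingSubring (hsq : ∀ a b, π a = 0 → π b = 0 → a * b = 0)
    [CharP E p] [CharP F p] : ∃ S, IsLiftingSubring π p S := by
  rcases CharP.char_is_prime_or_zero F p with hp | rfl
  · have : Fact p.Prime := ⟨hp⟩
    refine ⟨(frobenius E p).range, fun r => ⟨r, rfl⟩, ?_⟩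
    rintro _ ⟨r, rfl⟩ hr
    have hr0 : π r = 0 := by rwa [frobenius_def, map_pow, pow_eq_zero_iff hp.ne_zero] at hr
    rw [frobenius_def, ← Nat.sub_add_cancel hp.one_lt.le, pow_succ, ← Nat.sub_add_cancel
      (Nat.sub_pos_of_lt hp.one_lt), pow_succ, mul_assoc, hsq _ _ hr0 hr0, mul_zero]
  · have : CharZero F := CharP.charP_to_charZero F
    refine ⟨⊥, fun r => by rw [pow_zero]; exact one_mem _, ?_⟩
    rintro _ ⟨n, rfl⟩ hn
    rw [eq_intCast, map_intCast, Int.cast_eq_zero] at hn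
    rw [hn, map_zero]

theorem exists_maximal_isLiftingSubring (hsq : ∀ a b, π a = 0 → π b = 0 → a * b = 0)
    [CharP E p] [CharP F p] : ∃ S, Maximal (IsLiftingSubring π p) S := by
  obtain ⟨S₀, hS₀⟩ := exists_isLiftingSubring hsq
  refine (zorn_le_nonempty₀ {S | IsLiftingSubring π p S} (fun c hc hchain T hT => ?_) S₀ hS₀).imp
    fun S hS => hS.2
  have hmem : ∀ {r}, r ∈ sSup c ↔ ∃ S ∈ c, r ∈ S :=
    Subring.mem_sSup_of_directedOn ⟨T, hT⟩ hchain.directedOn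
  refine ⟨sSup c, ⟨fun r => hmem.mpr ⟨T, hT, (hc hT).1 r⟩, fun r hr hr0 => ?_⟩,
    fun _ => le_sSup⟩
  obtain ⟨S, hS, hrS⟩ := hmem.mp hr
  exact (hc hS).2 r hrS hr0

theorem IsLiftingSubring.mem_of_maximal (hS : Maximal (IsLiftingSubring π p) S)
    {R : Type*} [CommRing R] (ρ : R →+* E) (hρ : S ≤ ρ.range) (r : E)
    (hr : ∀ q : R[X], π (q.eval₂ ρ r) = 0 → q.eval₂ ρ r = 0) : r ∈ S := by
  have hle : S ≤ (eval₂RingHom ρ r).range := fun s hs => by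
    obtain ⟨a, rfl⟩ := hρ hs
    exact ⟨C a, eval₂_C ρ r⟩
  refine hS.2 ⟨fun x => hle (hS.1.1 x), ?_⟩ hle ⟨X, eval₂_X ρ r⟩
  rintro _ ⟨q, rfl⟩
  exact hr q

theorem IsLiftingSubring.exists_map_eq_inv (hπ : Function.Surjective π)
    (hsq : ∀ a b, π a = 0 → π b = 0 → a * b = 0) (hS : Maximal (IsLiftingSubring π p) S)
    {s : E} (hs : s ∈ S) (hs0 : π s ≠ 0) : ∃ s' ∈ S, π s' = (π s)⁻¹ := by
  obtain ⟨u, rfl⟩ := isUnit_of_map_ne_zero hπ hsq hs0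
  have hπu : π ↑u⁻¹ * π u = 1 := by rw [← map_mul, Units.inv_mul, map_one]
  refine ⟨_, ?_, eq_inv_of_mul_eq_one_left hπu⟩
  refine IsLiftingSubring.mem_of_maximal hS S.subtype (by rw [Subring.range_subtype]) _
    fun q hq => ?_
  let _ : Invertible (↑u⁻¹ : E) := ⟨u, u.mul_inv, u.inv_mul⟩
  -- clearing denominators: `q (u⁻¹) * u ^ N` is the value at `u` of the reflected polynomial
  set w := (reflect q.natDegree q).eval (⟨u, hs⟩ : S)
  have hw : q.eval₂ S.subtype ↑u⁻¹ = w * ↑u⁻¹ ^ q.natDegree := by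
    rw [← eval₂_reflect_mul_pow S.subtype _ _ q le_rfl]
    exact congrArg (· * _) (eval₂_at_apply S.subtype (⟨u, hs⟩ : S))
  have hπw : π w = 0 := by
    rw [hw, map_mul, map_pow] at hq
    exact (mul_eq_zero.mp hq).resolve_right (pow_ne_zero _ (left_ne_zero_of_mul_eq_one hπu))
  rw [hw, hS.1.2 w w.2 hπw, zero_mul]

theorem IsLiftingSubring.exists_subfield_lift (hπ : Function.Surjective π)
    (hsq : ∀ a b, π a = 0 → π b = 0 → a * b = 0) (hS : Maximal (IsLiftingSubring π p) S) :
    ∃ (K : Subfield F) (ρ : K →+* E),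
      (∀ k, ρ k ∈ S) ∧ (∀ k, π (ρ k) = k) ∧ ∀ s ∈ S, π s ∈ K := by
  let K : Subfield F :=
    { S.map π with
      inv_mem' := by
        rintro _ ⟨s, hs, rfl⟩
        by_cases hs0 : π s = 0
        · exact ⟨s, hs, by rw [hs0, inv_zero]⟩
        · exact IsLiftingSubring.exists_map_eq_inv hπ hsq hS hs hs0 }
  let f : S →+* K := (π.comp S.subtype).codRestrict K fun s => ⟨s, s.2, rfl⟩
  have hf : Function.Bijective f :=
    ⟨fun a b hab => Subtype.ext (hS.1.eq_of_map_eq a.2 b.2 (congrArg Subtype.val hab)),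
      by rintro ⟨_, s, hs, rfl⟩; exact ⟨⟨s, hs⟩, rfl⟩⟩
  let e := RingEquiv.ofBijective f hf
  exact ⟨K, S.subtype.comp e.symm.toRingHom, fun k => (e.symm k).2,
    fun k => congrArg Subtype.val (e.apply_symm_apply k), fun s hs => ⟨s, hs, rfl⟩⟩

theorem IsLiftingSubring.mem_map_of_maximal [CharP E p] [CharP F p]
    (hπ : Function.Surjective π) (hsq : ∀ a b, π a = 0 → π b = 0 → a * b = 0)
    (hS : Maximal (IsLiftingSubring π p) S) (t : F) : t ∈ S.map π := by
  obtain ⟨K, ρ, hρS, hπρ, hK⟩ := exists_subfield_lift hπ hsq hS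
  have hπ_eval₂ (q : K[X]) (r : E) : π (q.eval₂ ρ r) = aeval (π r) q := by
    rw [hom_eval₂, aeval_def]
    congr 1
    exact RingHom.ext hπρ
  have hρ_range : S ≤ ρ.range := fun s hs =>
    ⟨⟨π s, hK s hs⟩, hS.1.eq_of_map_eq (hρS _) hs (hπρ _)⟩
  suffices t ∈ K from ⟨ρ ⟨t, this⟩, hρS _, hπρ _⟩
  by_contra ht
  obtain ⟨r₀, rfl⟩ := hπ t
  -- a lift of a root of the minimal polynomial generates, together with `S`, a lifting subring
  have hroot (r : E) (hr : π r = π r₀) (hr0 : (minpoly K (π r₀)).eval₂ ρ r = 0) : False := by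
    refine ht (hr ▸ hK r (mem_of_maximal hS ρ hρ_range r fun q hq => ?_))
    obtain ⟨q, rfl⟩ := minpoly.dvd K (π r₀) (by rwa [hπ_eval₂, hr] at hq)
    rw [eval₂_mul, hr0, zero_mul]
  rcases CharP.char_is_prime_or_zero F p with hp | rfl
  · have hpow : π r₀ ^ p ∈ K := map_pow π r₀ p ▸ hK _ (hS.1.1 r₀)
    refine hroot r₀ rfl ?_
    have ht' : π r₀ ∉ (algebraMap K F).range := by rintro ⟨k, hk⟩; exact ht (hk ▸ k.2)
    rw [minpoly_eq_X_pow_sub_C_of_notMem_range hp ht' ⟨_, hpow⟩ rfl, eval₂_sub, eval₂_X_pow,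
      eval₂_C, sub_eq_zero]
    exact hS.1.eq_of_map_eq (hS.1.1 r₀) (hρS _) (by rw [hπρ, map_pow])
  · have : CharZero F := CharP.charP_to_charZero F
    by_cases hint : IsIntegral K (π r₀)
    · have hsep := PerfectField.separable_of_irreducible (minpoly.irreducible hint)
      obtain ⟨r, hr, hr0⟩ := exists_eval_eq_zero_of_map_eval_eq_zero hπ hsq
        ((minpoly K (π r₀)).map ρ) r₀ (by rw [eval_map, hπ_eval₂, minpoly.aeval])
        (by rw [derivative_map, eval_map, hπ_eval₂]
            exact hsep.aeval_derivative_ne_zero (minpoly.aeval K _))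
      exact hroot r hr (by rwa [eval_map] at hr0)
    · exact hroot r₀ rfl (by rw [minpoly.eq_zero hint, eval₂_zero])

/-- A field is formally smooth over its prime field. -/
theorem exists_ringHom_section_of_sq_eq_zero (p : ℕ) [CharP E p] [CharP F p] (π : E →+* F)
    (hπ : Function.Surjective π) (hsq : ∀ a b, π a = 0 → π b = 0 → a * b = 0) :
    ∃ σ : F →+* E, ∀ x, π (σ x) = x := by
  obtain ⟨S, hS⟩ := exists_maximal_isLiftingSubring (p := p) hsq
  let e := RingEquiv.ofBijective (π.comp S.subtype)
    ⟨fun a b hab => Subtype.ext (hS.1.eq_of_map_eq a.2 b.2 hab), fun t => by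
      obtain ⟨s, hs, rfl⟩ := IsLiftingSubring.mem_map_of_maximal hπ hsq hS t
      exact ⟨⟨s, hs⟩, rfl⟩⟩
  exact ⟨S.subtype.comp e.symm.toRingHom, e.apply_symm_apply⟩

end SquareZeroSection

structure SymmCocycle (F X : Type*) [Field F] [AddCommGroup X] [Module F X] where
  toFun : F → F → X
  symm : ∀ x y, toFun x y = toFun y x
  add_left : ∀ x x' y, toFun (x + x') y = toFun x y + toFun x' y
  cocycle : ∀ x y z, toFun (x * y) z + z • toFun x y = toFun x (y * z) + x • toFun y z

namespace SymmCocycle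

variable {F X : Type*} [Field F] [AddCommGroup X] [Module F X] (D : SymmCocycle F X)

instance : CoeFun (SymmCocycle F X) fun _ => F → F → X := ⟨toFun⟩

theorem add_right (x y y' : F) : D x (y + y') = D x y + D x y' := by
  rw [D.symm, D.add_left, D.symm y, D.symm y']

theorem zero_left (y : F) : D 0 y = 0 := by
  simpa using D.add_left 0 0 y

theorem one_left (y : F) : D 1 y = y • D 1 1 := by
  simpa [two_smul, eq_comm] using D.cocycle 1 1 y

/-- The square-zero extension of `F` by `X` classified by `D`. -/
def Ext (_ : SymmCocycle F X) : Type _ := F × X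

namespace Ext

variable {D}

instance : AddCommGroup D.Ext := inferInstanceAs (AddCommGroup (F × X))

def fst (a : D.Ext) : F := Prod.fst (α := F) (β := X) a

def snd (a : D.Ext) : X := Prod.snd (α := F) (β := X) a

@[ext] theorem ext {a b : D.Ext} (h₁ : a.fst = b.fst) (h₂ : a.snd = b.snd) : a = b :=
  Prod.ext h₁ h₂

@[simp] theorem fst_add (a b : D.Ext) : (a + b).fst = a.fst + b.fst := rfl
@[simp] theorem snd_add (a b : D.Ext) : (a + b).snd = a.snd + b.snd := rfl
@[simp] theorem fst_zero : (0 : D.Ext).fst = 0 := rfl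
@[simp] theorem snd_zero : (0 : D.Ext).snd = 0 := rfl
@[simp] theorem fst_nsmul (n : ℕ) (a : D.Ext) : (n • a).fst = n • a.fst := rfl
@[simp] theorem snd_nsmul (n : ℕ) (a : D.Ext) : (n • a).snd = n • a.snd := rfl

instance : Mul D.Ext := ⟨fun a b => (a.fst * b.fst, a.fst • b.snd + b.fst • a.snd + D a.fst b.fst)⟩

-- the unit is `(1, -D 1 1)` because `D` need not vanish on `1`
instance : One D.Ext := ⟨(1, -D 1 1)⟩

@[simp] theorem fst_mul (a b : D.Ext) : (a * b).fst = a.fst * b.fst := rfl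
@[simp] theorem snd_mul (a b : D.Ext) :
    (a * b).snd = a.fst • b.snd + b.fst • a.snd + D a.fst b.fst := rfl
@[simp] theorem fst_one : (1 : D.Ext).fst = 1 := rfl
@[simp] theorem snd_one : (1 : D.Ext).snd = -D 1 1 := rfl

instance : CommRing D.Ext where
  left_distrib a b c := by
    ext
    · exact mul_add _ _ _
    · simp only [snd_mul, fst_add, snd_add, D.add_right, smul_add, add_smul]; abel
  right_distrib a b c := by
    ext
    · exact add_mul _ _ _
    · simp only [snd_mul, fst_add, snd_add, D.add_left, smul_add, add_smul]; abel
  zero_mul a := by ext <;> simp [D.zero_left]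
  mul_zero a := by ext <;> simp [D.symm _ 0, D.zero_left]
  mul_assoc a b c := by
    ext
    · exact mul_assoc _ _ _
    · simp only [fst_mul, snd_mul, smul_add, smul_smul]
      linear_combination (norm := module) D.cocycle a.fst b.fst c.fst
  one_mul a := by
    ext
    · exact one_mul _
    · rw [snd_mul, fst_one, snd_one, D.one_left a.fst, one_smul, smul_neg]; abel
  mul_one a := by
    ext
    · exact mul_one _
    · rw [snd_mul, fst_one, snd_one, D.symm a.fst, D.one_left a.fst, one_smul, smul_neg]; abel
  mul_comm a b := by
    ext
    · exact mul_comm _ _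
    · rw [snd_mul, snd_mul, D.symm]; abel
  __ := (inferInstance : AddCommGroup D.Ext)

def fstHom : D.Ext →+* F where
  toFun := fst
  map_one' := rfl
  map_mul' _ _ := rfl
  map_zero' := rfl
  map_add' _ _ := rfl

@[simp] theorem fstHom_apply (a : D.Ext) : fstHom a = a.fst := rfl

theorem fstHom_surjective : Function.Surjective (fstHom : D.Ext →+* F) :=
  fun x => ⟨(x, 0), rfl⟩

theorem mul_eq_zero_of_fst_eq_zero {a b : D.Ext} (ha : a.fst = 0) (hb : b.fst = 0) :
    a * b = 0 := by
  ext <;> simp [ha, hb, D.zero_left]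

instance (p : ℕ) [CharP F p] : CharP D.Ext p where
  cast_eq_zero_iff n := by
    rw [← CharP.cast_eq_zero_iff F p]
    refine ⟨fun h => by rw [← map_natCast (fstHom : D.Ext →+* F), h, map_zero], fun h => ?_⟩
    rw [← nsmul_one]
    ext
    · rw [fst_nsmul, fst_one, nsmul_one, h, fst_zero]
    · rw [snd_nsmul, snd_one, ← Nat.cast_smul_eq_nsmul F, h, zero_smul, snd_zero]

end Ext

theorem exists_additive_eq_coboundary :
    ∃ α : F → X, (∀ x y, α (x + y) = α x + α y) ∧
      ∀ x y, D x y = α (x * y) - x • α y - y • α x := by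
  obtain ⟨σ, hσ⟩ := exists_ringHom_section_of_sq_eq_zero (ringChar F) Ext.fstHom
    Ext.fstHom_surjective fun _ _ => Ext.mul_eq_zero_of_fst_eq_zero (D := D)
  simp only [Ext.fstHom_apply] at hσ
  refine ⟨fun x => (σ x).snd, fun x y => by simp only [map_add, Ext.snd_add], fun x y => ?_⟩
  have hmul := congrArg Ext.snd (map_mul σ x y)
  rw [Ext.snd_mul, hσ, hσ] at hmul
  beta_reduce
  rw [hmul]
  abel

end SymmCocycle

section FunctionalEquation

variable {F X : Type*} [Field F] [AddCommGroup X] [Module F X] {f g : F → X}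

def cauchyDiff (g : F → X) (x y : F) : X := g (x + y) - g x - g y

theorem map_zero_of_functionalEquation
    (h : ∀ x y, f (x + y) - f x - f y = g (x * y) - x • g y - y • g x) : g 0 = 0 := by
  have h₀ := h 0 0
  have h₁ := h 0 1
  simp only [add_zero, zero_add, mul_zero, mul_one, zero_smul, one_smul, sub_zero] at h₀ h₁
  linear_combination (norm := module) h₁ - h₀

-- the additive 2-cocycle identity of `cauchyDiff f`, rewritten in terms of `g`
theorem cauchyDiff_mul_sub_of_functionalEquation
    (h : ∀ x y, f (x + y) - f x - f y = g (x * y) - x • g y - y • g x) (x y z : F) :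
    cauchyDiff g (x * y) (x * z) - cauchyDiff g (x * z) (y * z) =
      x • cauchyDiff g y z - z • cauchyDiff g x y := by
  unfold cauchyDiff
  have h₁ := h x y
  have h₂ := h (x + y) z
  have h₃ := h x (y + z)
  have h₄ := h y z
  rw [add_assoc, add_mul] at h₂
  rw [mul_add] at h₃
  simp only [add_smul, smul_sub] at h₂ h₃ ⊢
  linear_combination (norm := module) h₁ + h₂ - h₃ - h₄

theorem cauchyDiff_mul_right_of_functionalEquation
    (h : ∀ x y, f (x + y) - f x - f y = g (x * y) - x • g y - y • g x) (x y z : F) :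
    cauchyDiff g (x * z) (y * z) = z • cauchyDiff g x y := by
  have hone (u v : F) : cauchyDiff g v (u * v) = v • cauchyDiff g 1 u := by
    have := cauchyDiff_mul_sub_of_functionalEquation h 1 u v
    simp only [one_mul, one_smul] at this
    exact sub_right_inj.mp this
  rcases eq_or_ne x 0 with rfl | hx
  · simp [cauchyDiff, map_zero_of_functionalEquation h]
  · have h₁ := hone (y / x) (x * z)
    have h₂ := hone (y / x) x
    rw [show y / x * (x * z) = y * z by field_simp] at h₁
    rw [show y / x * x = y by field_simp] at h₂
    rw [h₁, h₂, smul_smul, mul_comm]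

def SymmCocycle.ofFunctionalEquation
    (h : ∀ x y, f (x + y) - f x - f y = g (x * y) - x • g y - y • g x) : SymmCocycle F X where
  toFun x y := g (x * y) - x • g y - y • g x
  symm x y := by rw [mul_comm]; abel
  add_left x x' y := by
    have := cauchyDiff_mul_right_of_functionalEquation h x x' y
    unfold cauchyDiff at this
    rw [add_mul]
    simp only [add_smul, smul_sub] at this ⊢
    linear_combination (norm := module) this
  cocycle x y z := by
    rw [mul_assoc]
    simp only [smul_sub, smul_smul]
    module

theorem map_add_of_functionalEquation (hchar : (2 : F) ≠ 0) {α : F → X}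
    (hα : ∀ x y, α (x + y) = α x + α y)
    (h : ∀ x y, f (x + y) - f x - f y = α (x * y) - x • α y - y • α x) (x y : F) :
    f (x + y) - (2 : F)⁻¹ • α ((x + y) ^ 2) + (x + y) • α (x + y) =
      (f x - (2 : F)⁻¹ • α (x ^ 2) + x • α x) + (f y - (2 : F)⁻¹ • α (y ^ 2) + y • α y) := by
  have hsq : α ((x + y) ^ 2) = α (x ^ 2) + (2 : F) • α (x * y) + α (y ^ 2) := by
    rw [show (x + y) ^ 2 = x ^ 2 + (x * y + x * y) + y ^ 2 by ring, hα, hα, hα, two_smul]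
  rw [hsq, hα, smul_add, smul_add, smul_smul, inv_mul_cancel₀ hchar, one_smul]
  simp only [add_smul, smul_add]
  linear_combination (norm := module) h x y

end FunctionalEquation

theorem stmt_0 {F X : Type*} [Field F] [AddCommGroup X] [Module F X]
    (hchar : (2 : F) ≠ 0)
    (f g : F → X)
    (h : ∀ x y : F, f (x + y) - f x - f y = g (x * y) - x • g y - y • g x) :
    ∃ (α β φ : F → X),
      (∀ x y : F, α (x + y) = α x + α y) ∧
      (∀ x y : F, β (x + y) = β x + β y) ∧
      (∀ x y : F, φ (x * y) = x • φ y + y • φ x) ∧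
      (∀ x : F, f x = β x + (2 : F)⁻¹ • α (x ^ 2) - x • α x) ∧
      (∀ x : F, g x = φ x + α x) := by
  obtain ⟨α, hα, hδα⟩ := (SymmCocycle.ofFunctionalEquation h).exists_additive_eq_coboundary
  have hgα (x y : F) : g (x * y) - x • g y - y • g x = α (x * y) - x • α y - y • α x := hδα x y
  have hfα (x y : F) : f (x + y) - f x - f y = α (x * y) - x • α y - y • α x :=
    (h x y).trans (hgα x y)
  refine ⟨α, fun x => f x - (2 : F)⁻¹ • α (x ^ 2) + x • α x, fun x => g x - α x, hα,
    map_add_of_functionalEquation hchar hα hfα, fun x y => ?_,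
    fun x => by beta_reduce; abel, fun x => by beta_reduce; abel⟩
  beta_reduce
  simp only [smul_sub]
  linear_combination (norm := module) hgα x y
end

section
/- Let F be a field, X a vector space over F, and g : F → X a function. Suppose the Cauchy difference C(x,y) = g(x+y) − g(x) − g(y) satisfies C(x, xy) = x·C(1, y) for all x, y ∈ F, and C(0,0) = 0. Then C is homogeneous: C(tx, ty) = t·C(x,y) for all t, x, y ∈ F. -/
/-!
Writing `y = x * (x⁻¹ * y)`, the hypothesis gives `C x y = x • C 1 (x⁻¹ * y)` for `x ≠ 0`, and
likewise `C (t * x) (t * y) = (t * x) • C 1 (x⁻¹ * y)`, which is homogeneity. When `x = 0`, both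
sides vanish: the Cauchy difference `C 0 z = -g 0` does not depend on `z`, and `C 0 0 = 0` is the
hypothesis at `x = 0`.
-/

theorem cauchyDiff_zero_left {A X : Type*} [AddZeroClass A] [AddCommGroup X] {g : A → X}
    {C : A → A → X} (hC : ∀ x y, C x y = g (x + y) - g x - g y) (z : A) : C 0 z = C 0 0 := by
  simp only [hC, zero_add]
  abel

section

variable {F X : Type*} [Field F] [AddCommGroup X] [Module F X] {C : F → F → X}

theorem apply_mul_mul_eq_smul_apply_one (h1 : ∀ x y, C x (x * y) = x • C 1 y) (t : F) {x : F}
    (hx : x ≠ 0) (y : F) : C (t * x) (t * y) = (t * x) • C 1 (x⁻¹ * y) := by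
  have hy : t * y = t * x * (x⁻¹ * y) := by field_simp
  rw [hy, h1]

theorem apply_mul_mul_of_ne_zero (h1 : ∀ x y, C x (x * y) = x • C 1 y) (t : F) {x : F}
    (hx : x ≠ 0) (y : F) : C (t * x) (t * y) = t • C x y := by
  have hxy := apply_mul_mul_eq_smul_apply_one h1 1 hx y
  rw [one_mul, one_mul] at hxy
  rw [hxy, apply_mul_mul_eq_smul_apply_one h1 t hx, mul_smul]

end

theorem stmt_5_general {F X : Type*} [Field F] [AddCommGroup X] [Module F X]
    (g : F → X)
    (C : F → F → X) (hC : ∀ x y : F, C x y = g (x + y) - g x - g y)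
    (h1 : ∀ x y : F, C x (x * y) = x • C 1 y) :
    ∀ t x y : F, C (t * x) (t * y) = t • C x y := by
  intro t x y
  rcases eq_or_ne x 0 with rfl | hx
  · have hC00 : C 0 0 = 0 := by simpa using h1 0 0
    rw [mul_zero, cauchyDiff_zero_left hC (t * y), cauchyDiff_zero_left hC y, hC00, smul_zero]
  · exact apply_mul_mul_of_ne_zero h1 t hx y

theorem stmt_5 {F X : Type*} [Field F] [AddCommGroup X] [Module F X]
    (g : F → X)
    (C : F → F → X) (hC : ∀ x y : F, C x y = g (x + y) - g x - g y)
    (h1 : ∀ x y : F, C x (x * y) = x • C 1 y)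
    (h0 : C 0 0 = 0) :
    ∀ t x y : F, C (t * x) (t * y) = t • C x y :=
  stmt_5_general g C hC h1
end

section
/- Let F be a field of characteristic ≠ 2, X a vector space over F, and f : F → X a function such that its Cauchy difference satisfies f(x+y) − f(x) − f(y) = α(xy) − x·α(y) − y·α(x) for all x, y ∈ F, where α : F → X is additive. Then the function x ↦ f(x) − ((1/2)·α(x²) − x·α(x)) is additive. -/
theorem stmt_7 {F X : Type*} [Field F] [AddCommGroup X] [Module F X]
    (hchar : (2 : F) ≠ 0)
    (α : F → X) (hα : ∀ x y : F, α (x + y) = α x + α y)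
    (f : F → X)
    (h : ∀ x y : F, f (x + y) - f x - f y = α (x * y) - x • α y - y • α x) :
    ∀ x y : F,
      (f (x + y) - ((2 : F)⁻¹ • α ((x + y) ^ 2) - (x + y) • α (x + y))) =
        (f x - ((2 : F)⁻¹ • α (x ^ 2) - x • α x)) +
        (f y - ((2 : F)⁻¹ • α (y ^ 2) - y • α y)) := by
  intro x y
  have hf : f (x + y) = f x + f y + (α (x * y) - x • α y - y • α x) := by
    have := h x y; linear_combination (norm := abel) this
  have h2 : α ((x + y) ^ 2) = α (x ^ 2) + (α (x * y) + α (x * y)) + α (y ^ 2) := by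
    rw [show (x + y) ^ 2 = x ^ 2 + (x * y + x * y) + y ^ 2 by ring, hα, hα, hα]
  have hhalf : (2 : F)⁻¹ • (α (x * y) + α (x * y)) = α (x * y) := by
    rw [← two_smul F, smul_smul, inv_mul_cancel₀ hchar, one_smul]
  rw [hf, h2, hα x y, smul_add, smul_add, hhalf]
  simp only [add_smul, smul_add]
  abel
end

section
/- Let F be a field, X a vector space over F, and f, g : F → X functions satisfying f(x+y) − f(x) − f(y) = g(xy) − x·g(y) − y·g(x) for all x, y ∈ F. Then the Cauchy difference C_g(x,y) = g(x+y) − g(x) − g(y) satisfies C_g(xz, yz) − z·C_g(x,y) − C_g(xz, xy) + x·C_g(z,y) = 0 for all x, y, z ∈ F. -/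
theorem stmt_8 {F X : Type*} [Field F] [AddCommGroup X] [Module F X]
    (f g : F → X)
    (h : ∀ x y : F, f (x + y) - f x - f y = g (x * y) - x • g y - y • g x)
    (C : F → F → X) (hC : ∀ x y : F, C x y = g (x + y) - g x - g y) :
    ∀ x y z : F,
      C (x * z) (y * z) - z • C x y - C (x * z) (x * y) + x • C z y = 0 := by
  have key : ∀ a b c : F, C (a * c) (b * c) - c • C a b =
      f (a + b + c) - f (a + b) - f (a + c) - f (b + c) + f a + f b + f c := by
    intro a b c
    rw [hC, hC, show a * c + b * c = (a + b) * c by ring]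
    linear_combination (norm := module) h a c + h b c - h (a + b) c
  intro x y z
  have h1 := key x y z
  have h2 := key z y x
  rw [show z * x = x * z by ring, show y * x = x * y by ring] at h2
  have : C (x * z) (y * z) - z • C x y = C (x * z) (x * y) - x • C z y := by
    rw [h1, h2]; ring_nf; abel
  rw [sub_eq_sub_iff_sub_eq_sub] at this
  linear_combination (norm := abel) this
end

section
/- Let F be a field of characteristic 0 and f : F → F a function satisfying f(x+y) − f(x) − f(y) + f(xy) − x·f(y) − y·f(x) = 0 for all x, y ∈ F. Then f is additive and satisfies f(xy) = x·f(y) + y·f(x) for all x, y ∈ F. -/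
theorem stmt_10 {F : Type*} [Field F] [CharZero F]
    (f : F → F)
    (h : ∀ x y : F,
      f (x + y) - f x - f y + (f (x * y) - x * f y - y * f x) = 0) :
    (∀ x y : F, f (x + y) = f x + f y) ∧
    (∀ x y : F, f (x * y) = x * f y + y * f x) := by
  have f0 : f 0 = 0 := by
    have := h 1 0
    simp at this
    exact this
  have hsucc : ∀ x : F, f (x + 1) = f x + (x + 1) * f 1 := by
    intro x
    have := h x 1
    rw [mul_one] at this
    linear_combination this
  have key : ∀ x y : F, f (x * y + x) = f (x * y) + f x + f 1 * (x * y) := by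
    intro x y
    have h1 := h x (y + 1)
    rw [mul_add, mul_one, ← add_assoc, hsucc (x + y), hsucc y] at h1
    have h2 := h x y
    linear_combination h1 - h2
  have hadd' : ∀ x u : F, x ≠ 0 → f (u + x) = f u + f x + f 1 * u := by
    intro x u hx
    have := key x (u / x)
    rw [mul_div_cancel₀ u hx] at this
    exact this
  have hc : f 1 = 0 := by
    have h1 := hadd' 1 2 one_ne_zero
    have h2 := hadd' 2 1 two_ne_zero
    rw [show (1 : F) + 2 = 2 + 1 by ring] at h2
    rw [h1] at h2
    linear_combination h2
  have hadd : ∀ x y : F, f (x + y) = f x + f y := by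
    intro x y
    rcases eq_or_ne y 0 with hy | hy
    · rw [hy, add_zero, f0, add_zero]
    · rw [hadd' y x hy, hc, zero_mul, add_zero]
  refine ⟨hadd, fun x y => ?_⟩
  have := h x y
  rw [hadd x y] at this
  linear_combination this
end
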